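/- (Fubini-type theorem for the Segre embedding.) Let n > 2 and m > 2, let P₀ and Q₀ be fixed rank-one orthogonal projections on ℂⁿ and ℂᵐ, and let μₙ, μₘ be the normalized Haar probability measures on U(n) and U(m). For every complex matrix M indexed by (Fin n × Fin m) × (Fin n × Fin m), n·m·∫_{U(n)}∫_{U(m)} tr( M·((U P₀ Uᴴ) ⊗ₖ (V Q₀ Vᴴ)) ) dμₘ(V) dμₙ(U) = tr(M). In the paper's language: ∫_{P(ℂⁿ)×P(ℂᵐ)} ρ∘Seg dν_H dν_K = ∫_{P(ℂⁿ⊗ℂᵐ)} ρ dν for the frame function ρ(r) = tr(Mr). -/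

import Mathlib

/-!
The Haar average `A = ∫ U P Uᴴ dμ(U)` satisfies `W A Wᴴ = A` for every unitary `W` by left
invariance, so it commutes with all unitaries and hence, since the unitaries span all matrices,
with every matrix: it is the scalar `(tr A / N) • 1 = (tr P / N) • 1`, i.e. `(1 / N) • 1` for a
rank-one projection. As `(p, q) ↦ tr (M (p ⊗ₖ q))` is bilinear, the two integrals may be moved
inside it one at a time, giving `tr (M ((1 / n) • 1 ⊗ₖ (1 / m) • 1)) = tr M / (n m)`.
-/

open MeasureTheory Matrix Kronecker

noncomputable instance (k : Type*) [Fintype k] [DecidableEq k] :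
    MeasurableSpace (Matrix.unitaryGroup k ℂ) := borel _

/-- `p` is a rank-one orthogonal projection. -/
def IsRankOneProj {k : Type*} [Fintype k] [DecidableEq k] (p : Matrix k k ℂ) : Prop :=
  p.IsHermitian ∧ p * p = p ∧ p.rank = 1

instance (k : Type*) [Fintype k] [DecidableEq k] :
    BorelSpace (Matrix.unitaryGroup k ℂ) := ⟨rfl⟩

theorem Matrix.trace_eq_rank_of_isIdempotentElem {k 𝕜 : Type*} [Fintype k] [DecidableEq k]
    [Field 𝕜] {P : Matrix k k 𝕜} (hP : IsIdempotentElem P) : P.trace = P.rank := by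
  have hf : IsIdempotentElem P.mulVecLin := by
    rw [IsIdempotentElem, Module.End.mul_eq_comp, ← Matrix.mulVecLin_mul, hP.eq]
  rw [Matrix.rank, ← ((LinearMap.isProj_range_iff_isIdempotentElem _).mpr hf).trace,
    ← Matrix.toLin'_apply', Matrix.trace_toLin'_eq]

theorem IsRankOneProj.trace_eq_one {k : Type*} [Fintype k] [DecidableEq k] {P : Matrix k k ℂ}
    (hP : IsRankOneProj P) : P.trace = 1 := by
  rw [trace_eq_rank_of_isIdempotentElem hP.2.1, hP.2.2, Nat.cast_one]

open scoped Matrix.Norms.L2Operator in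
theorem Matrix.eq_trace_div_card_smul_one_of_forall_commute_unitary {k : Type*} [Fintype k]
    [DecidableEq k] {A : Matrix k k ℂ} (hA : ∀ W ∈ unitaryGroup k ℂ, Commute W A) :
    A = (A.trace / Fintype.card k) • 1 := by
  have hcomm (X : Matrix k k ℂ) : Commute X A := by
    have hspan : Submodule.span ℂ (unitary (Matrix k k ℂ) : Set (Matrix k k ℂ)) ≤
        Subalgebra.toSubmodule (Subalgebra.centralizer ℂ {A}) :=
      Submodule.span_le.mpr fun W hW => (Subalgebra.mem_centralizer_iff ℂ).mpr
        fun B hB => (Set.mem_singleton_iff.mp hB ▸ hA W hW).symm.eq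
    rw [CStarAlgebra.span_unitary] at hspan
    exact ((Subalgebra.mem_centralizer_iff ℂ).mp (hspan Submodule.mem_top) A rfl).symm
  obtain ⟨c, rfl⟩ := mem_range_scalar_iff_commute_single'.mpr fun i j => hcomm _
  cases isEmpty_or_nonempty k
  · exact Subsingleton.elim _ _
  · rw [scalar_apply, ← smul_one_eq_diagonal, trace_smul, trace_one, smul_eq_mul,
      mul_div_cancel_right₀ _ (by simp)]

section HaarAverage

variable {k : Type*} [Fintype k] [DecidableEq k] (μ : Measure (unitaryGroup k ℂ))

-- Matrix-valued integrals need a norm; the operator norm is the convenient one, since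
-- multiplying by a unitary preserves it.
open scoped Matrix.Norms.L2Operator

theorem integrable_unitary_conj [IsFiniteMeasure μ] (P : Matrix k k ℂ) :
    Integrable (fun U : unitaryGroup k ℂ => U.1 * P * (U.1)ᴴ) μ := by
  refine .of_bound ?_ ‖P‖ (ae_of_all _ fun U => ?_)
  · exact ((continuous_subtype_val.mul continuous_const).mul
      (continuous_star.comp continuous_subtype_val)).aestronglyMeasurable
  · rw [← star_eq_conjTranspose, mul_assoc, CStarRing.norm_mem_unitary_mul _ U.2,
      CStarRing.norm_mul_mem_unitary _ (Unitary.star_mem U.2)]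

theorem integral_linearMap_unitary_conj_comm [IsFiniteMeasure μ] {F : Type*}
    [NormedAddCommGroup F] [NormedSpace ℂ F] [CompleteSpace F]
    (L : Matrix k k ℂ →ₗ[ℂ] F) (P : Matrix k k ℂ) :
    ∫ U, L (U.1 * P * (U.1)ᴴ) ∂μ = L (∫ U, U.1 * P * (U.1)ᴴ ∂μ) :=
  (LinearMap.toContinuousLinearMap L).integral_comp_comm (integrable_unitary_conj μ P)

theorem trace_integral_unitary_conj [IsProbabilityMeasure μ] (P : Matrix k k ℂ) :
    (∫ U, U.1 * P * (U.1)ᴴ ∂μ).trace = P.trace := by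
  have htrace (U : unitaryGroup k ℂ) : (U.1 * P * (U.1)ᴴ).trace = P.trace := by
    rw [trace_mul_cycle, ← star_eq_conjTranspose, Unitary.coe_star_mul_self, Matrix.one_mul]
  have := integral_linearMap_unitary_conj_comm μ (traceLinearMap k ℂ ℂ) P
  simp only [traceLinearMap_apply, htrace, integral_const, probReal_univ, one_smul] at this
  exact this.symm

theorem conj_integral_unitary_conj [μ.IsMulLeftInvariant] [IsFiniteMeasure μ]
    (W : unitaryGroup k ℂ) (P : Matrix k k ℂ) :
    W.1 * (∫ U, U.1 * P * (U.1)ᴴ ∂μ) * (W.1)ᴴ = ∫ U, U.1 * P * (U.1)ᴴ ∂μ := by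
  have hconj (U : unitaryGroup k ℂ) :
      W.1 * (U.1 * P * (U.1)ᴴ * (W.1)ᴴ) = (W * U).1 * P * ((W * U).1)ᴴ := by
    simp only [Submonoid.coe_mul, conjTranspose_mul, Matrix.mul_assoc]
  have := integral_linearMap_unitary_conj_comm μ
    (LinearMap.mulLeft ℂ W.1 ∘ₗ LinearMap.mulRight ℂ (W.1)ᴴ) P
  simp only [LinearMap.comp_apply, LinearMap.mulLeft_apply, LinearMap.mulRight_apply,
    hconj] at this
  rw [Matrix.mul_assoc, ← this,
    integral_mul_left_eq_self (fun U : unitaryGroup k ℂ => U.1 * P * (U.1)ᴴ) W]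

theorem integral_unitary_conj [μ.IsMulLeftInvariant] [IsProbabilityMeasure μ]
    (P : Matrix k k ℂ) :
    ∫ U, U.1 * P * (U.1)ᴴ ∂μ = (P.trace / Fintype.card k) • 1 := by
  refine (eq_trace_div_card_smul_one_of_forall_commute_unitary fun W hW => ?_).trans
    (by rw [trace_integral_unitary_conj])
  have hconj := conj_integral_unitary_conj μ ⟨W, hW⟩ P
  calc W * _ = W * (∫ U, U.1 * P * (U.1)ᴴ ∂μ) * (star W * W) := by
        rw [Unitary.star_mul_self_of_mem hW, Matrix.mul_one]
    _ = _ := by rw [star_eq_conjTranspose, ← Matrix.mul_assoc, hconj]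

theorem integral_linearMap_unitary_conj [μ.IsMulLeftInvariant] [IsProbabilityMeasure μ]
    {F : Type*} [NormedAddCommGroup F] [NormedSpace ℂ F] [CompleteSpace F]
    (L : Matrix k k ℂ →ₗ[ℂ] F) (P : Matrix k k ℂ) :
    ∫ U, L (U.1 * P * (U.1)ᴴ) ∂μ = (P.trace / Fintype.card k) • L 1 := by
  rw [integral_linearMap_unitary_conj_comm, integral_unitary_conj, map_smul]

end HaarAverage

/-- Fubini-type theorem for the Segre embedding:
`nm ∫∫ tr(M (p_U ⊗ₖ q_V)) dμₘ(V) dμₙ(U) = tr M`. -/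
theorem fubini_segre (n m : ℕ) (hn : 2 < n) (hm : 2 < m)
    (P₀ : Matrix (Fin n) (Fin n) ℂ) (hP₀ : IsRankOneProj P₀)
    (Q₀ : Matrix (Fin m) (Fin m) ℂ) (hQ₀ : IsRankOneProj Q₀)
    (μn : Measure (Matrix.unitaryGroup (Fin n) ℂ))
    [IsProbabilityMeasure μn] [μn.IsMulLeftInvariant]
    (μm : Measure (Matrix.unitaryGroup (Fin m) ℂ))
    [IsProbabilityMeasure μm] [μm.IsMulLeftInvariant]
    (M : Matrix (Fin n × Fin m) (Fin n × Fin m) ℂ) :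
    ((n : ℂ) * (m : ℂ)) *
      ∫ U : Matrix.unitaryGroup (Fin n) ℂ,
        ∫ V : Matrix.unitaryGroup (Fin m) ℂ,
          (M * ((U.1 * P₀ * (U.1)ᴴ) ⊗ₖ (V.1 * Q₀ * (V.1)ᴴ))).trace ∂μm ∂μn
      = M.trace := by
  let B : Matrix (Fin n) (Fin n) ℂ →ₗ[ℂ] Matrix (Fin m) (Fin m) ℂ →ₗ[ℂ] ℂ :=
    (kroneckerBilinear (R := ℂ)).compr₂ (traceLinearMap _ ℂ ℂ ∘ₗ mulLeftLinearMap _ ℂ M)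
  have hB (p q) : B p q = (M * (p ⊗ₖ q)).trace := rfl
  have hn0 : (n : ℂ) ≠ 0 := by exact_mod_cast (by omega : n ≠ 0)
  have hm0 : (m : ℂ) ≠ 0 := by exact_mod_cast (by omega : m ≠ 0)
  have hinner (p) : ∫ V, B p (V.1 * Q₀ * (V.1)ᴴ) ∂μm = (m : ℂ)⁻¹ * B p 1 := by
    rw [integral_linearMap_unitary_conj, hQ₀.trace_eq_one, Fintype.card_fin, smul_eq_mul,
      one_div]
  have houter : ∫ U, B (U.1 * P₀ * (U.1)ᴴ) 1 ∂μn = (n : ℂ)⁻¹ * B 1 1 := by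
    refine (integral_linearMap_unitary_conj μn (B.flip 1) P₀).trans ?_
    rw [hP₀.trace_eq_one, Fintype.card_fin, smul_eq_mul, one_div, B.flip_apply]
  calc _ = (n * m : ℂ) * ∫ U, (m : ℂ)⁻¹ * B (U.1 * P₀ * (U.1)ᴴ) 1 ∂μn := by
        simp only [← hB, hinner]
    _ = (n * m : ℂ) * ((m : ℂ)⁻¹ * ((n : ℂ)⁻¹ * M.trace)) := by
        rw [integral_const_mul, houter, hB, one_kronecker_one, Matrix.mul_one]
    _ = M.trace := by field_simp
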